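/- Let (g_j)_{j≥0} be the generating functions defined by g₀ and the recursion g_j' + g_j''' − g_j⁽⁵⁾ = −g_{j−1} with vanishing data at 0 up to fourth order (j ≥ 1). Then |g_j(x)| ≤ 2^j |x|^{5j+1} / (5j+1)! for all j ≥ 0 and x ∈ [−1,0]. -/

import Mathlib

noncomputable def aK : ℝ := (Real.sqrt 5 + 1) / 2
noncomputable def bK : ℝ := (Real.sqrt 5 - 1) / 2

noncomputable def f₀ : ℝ → ℝ := fun x =>
  1 / (Real.sqrt aK * (aK + bK)) * Real.sinh (Real.sqrt aK * x)
    - 1 / (Real.sqrt bK * (aK + bK)) * Real.sin (Real.sqrt bK * x)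

noncomputable def g₀ : ℝ → ℝ := fun x =>
  1 / (aK * (aK + bK)) * Real.cosh (Real.sqrt aK * x)
    + 1 / (bK * (aK + bK)) * Real.cos (Real.sqrt bK * x)
    - 1 / (aK * (aK + bK)) - 1 / (bK * (aK + bK))

open Real Set

lemma sqrt5_lb : (11/5 : ℝ) ≤ Real.sqrt 5 := by
  rw [show (11/5:ℝ) = Real.sqrt ((11/5)^2) from (Real.sqrt_sq (by norm_num)).symm]
  apply Real.sqrt_le_sqrt; norm_num

lemma sqrt5_ub : Real.sqrt 5 ≤ 9/4 := by
  rw [show (9/4:ℝ) = Real.sqrt ((9/4)^2) from (Real.sqrt_sq (by norm_num)).symm]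
  apply Real.sqrt_le_sqrt; norm_num

lemma aK_lb : (3/2:ℝ) ≤ aK := by unfold aK; linarith [sqrt5_lb]
lemma aK_ub : aK ≤ 13/8 := by unfold aK; linarith [sqrt5_ub]
lemma bK_lb : (1/2:ℝ) ≤ bK := by unfold bK; linarith [sqrt5_lb]
lemma bK_ub : bK ≤ 5/8 := by unfold bK; linarith [sqrt5_ub]
lemma aK_pos : (0:ℝ) < aK := lt_of_lt_of_le (by norm_num) aK_lb
lemma bK_pos : (0:ℝ) < bK := lt_of_lt_of_le (by norm_num) bK_lb

lemma aK_mul_bK : aK * bK = 1 := by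
  unfold aK bK
  have h : Real.sqrt 5 * Real.sqrt 5 = 5 := Real.mul_self_sqrt (by norm_num)
  nlinarith [h]

lemma aK_sub_bK : aK - bK = 1 := by unfold aK bK; ring

lemma aK_add_bK : aK + bK = Real.sqrt 5 := by unfold aK bK; ring

lemma sqa_lb : (6/5:ℝ) ≤ Real.sqrt aK := by
  rw [show (6/5:ℝ) = Real.sqrt ((6/5)^2) from (Real.sqrt_sq (by norm_num)).symm]
  apply Real.sqrt_le_sqrt; nlinarith [aK_lb]

lemma sqa_ub : Real.sqrt aK ≤ 13/10 := by
  rw [show (13/10:ℝ) = Real.sqrt ((13/10)^2) from (Real.sqrt_sq (by norm_num)).symm]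
  apply Real.sqrt_le_sqrt; nlinarith [aK_ub]

lemma sqa_sq : Real.sqrt aK ^ 2 = aK := Real.sq_sqrt aK_pos.le
lemma sqb_sq : Real.sqrt bK ^ 2 = bK := Real.sq_sqrt bK_pos.le
lemma sqb_pos : (0:ℝ) < Real.sqrt bK := Real.sqrt_pos.2 bK_pos
lemma sqa_pos : (0:ℝ) < Real.sqrt aK := Real.sqrt_pos.2 aK_pos

lemma exp_le_inv_one_sub {x : ℝ} (hx0 : 0 ≤ x) (hx1 : x < 1) : Real.exp x ≤ 1 / (1 - x) := by
  have h := Real.add_one_le_exp (-x)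
  have hpos : 0 < 1 - x := by linarith
  have hexp : 0 < Real.exp x := Real.exp_pos x
  rw [Real.exp_neg] at h
  rw [le_div_iff₀ hpos, ← sub_nonneg]
  have : (1 - x) * Real.exp x ≤ 1 := by
    have := mul_le_mul_of_nonneg_right h hexp.le
    rwa [inv_mul_cancel₀ (ne_of_gt hexp), add_comm] at this
  linarith

lemma exp_sqa_le : Real.exp (Real.sqrt aK) ≤ 19/5 := by
  have h1 : Real.exp (Real.sqrt aK) ≤ Real.exp (13/10) :=
    Real.exp_le_exp.2 sqa_ub
  have h2 : Real.exp (13/10 : ℝ) = Real.exp 1 * (Real.exp (3/20) * Real.exp (3/20)) := by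
    rw [← Real.exp_add, ← Real.exp_add]; norm_num
  have h3 : Real.exp (3/20 : ℝ) ≤ 20/17 := by
    have := exp_le_inv_one_sub (x := 3/20) (by norm_num) (by norm_num)
    norm_num at this ⊢; linarith
  have h4 : Real.exp 1 < 2.7182818286 := Real.exp_one_lt_d9
  have h5 : (0:ℝ) < Real.exp (3/20) := Real.exp_pos _
  nlinarith [Real.exp_pos (1:ℝ)]

lemma sinh_sqa_le : Real.sinh (Real.sqrt aK) ≤ 19/10 := by
  rw [Real.sinh_eq]
  have := Real.exp_pos (-(Real.sqrt aK))
  have := exp_sqa_le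
  linarith

lemma sinh_mul_le {μ : ℝ} (hμ : 0 ≤ μ) {s : ℝ} (hs0 : 0 ≤ s) (hs1 : s ≤ 1) :
    Real.sinh (μ * s) ≤ s * Real.sinh μ := by
  set φ : ℝ → ℝ := fun t => s * Real.sinh t - Real.sinh (t * s) with hφ
  have hd : ∀ t : ℝ, HasDerivAt φ (s * Real.cosh t - Real.cosh (t * s) * s) t := by
    intro t
    have h2 : HasDerivAt (fun t : ℝ => Real.sinh (t * s)) (Real.cosh (t * s) * s) t := by
      have := ((hasDerivAt_id t).mul_const s).sinh
      simpa using this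
    exact ((Real.hasDerivAt_sinh t).const_mul s).sub h2
  have hmono : MonotoneOn φ (Set.Ici 0) := by
    apply monotoneOn_of_deriv_nonneg (convex_Ici 0)
    · exact Continuous.continuousOn (by fun_prop)
    · intro t _; exact (hd t).differentiableAt.differentiableWithinAt
    · intro t ht
      rw [interior_Ici] at ht
      rw [(hd t).deriv]
      have htpos : 0 < t := ht
      have hc : Real.cosh (t * s) ≤ Real.cosh t := by
        rw [Real.cosh_le_cosh, abs_of_nonneg (by positivity), abs_of_nonneg htpos.le]
        nlinarith
      nlinarith
  have h := hmono (Set.mem_Ici.2 le_rfl) (Set.mem_Ici.2 hμ) hμ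
  simp only [hφ, Real.sinh_zero, mul_zero, zero_mul, sub_zero, sub_self] at h
  -- h : 0 ≤ s * sinh μ - sinh (μ * s)
  linarith

lemma cosh_sub_one_le {t : ℝ} (ht : 0 ≤ t) : Real.cosh t - 1 ≤ t * Real.sinh t := by
  set ψ : ℝ → ℝ := fun u => u * Real.sinh u - Real.cosh u with hψ
  have hd : ∀ u : ℝ, HasDerivAt ψ (u * Real.cosh u) u := by
    intro u
    have h1 := (hasDerivAt_id u).mul (Real.hasDerivAt_sinh u)
    have h2 := h1.sub (Real.hasDerivAt_cosh u)
    refine h2.congr_deriv ?_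
    simp only [id_eq]
    ring
  have hmono : MonotoneOn ψ (Set.Ici 0) := by
    apply monotoneOn_of_deriv_nonneg (convex_Ici 0)
    · exact Continuous.continuousOn (by fun_prop)
    · intro u _; exact (hd u).differentiableAt.differentiableWithinAt
    · intro u hu
      rw [interior_Ici] at hu
      rw [(hd u).deriv]
      have hu' : 0 < u := hu
      positivity
  have h := hmono (Set.mem_Ici.2 le_rfl) (Set.mem_Ici.2 ht) ht
  simp only [hψ, Real.sinh_zero, Real.cosh_zero, mul_zero, zero_mul] at h
  linarith

lemma integral_bound_simple (u : ℝ → ℝ) (hu : Continuous u) (M : ℝ) (hM : 0 ≤ M) (m : ℕ)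
    (x : ℝ) (hx2 : x ≤ 0)
    (hub : ∀ t ∈ Set.Icc x 0, |u t| ≤ M * |t| ^ m / (m.factorial : ℝ)) :
    |∫ t in (0:ℝ)..x, u t| ≤ M * |x| ^ (m + 1) / ((m + 1).factorial : ℝ) := by
  have hfact : (0:ℝ) < (m.factorial : ℝ) := by exact_mod_cast m.factorial_pos
  rw [intervalIntegral.integral_symm, abs_neg]
  have h1 := intervalIntegral.abs_integral_le_integral_abs (f := u) (a := x) (b := 0) (μ := MeasureTheory.volume) hx2
  have h2 : (∫ t in x..0, |u t|) ≤ ∫ t in x..0, (M / m.factorial * (-1)^m) * t ^ m := by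
    apply intervalIntegral.integral_mono_on hx2 (hu.abs.intervalIntegrable _ _)
      (Continuous.intervalIntegrable (by fun_prop) _ _)
    intro t ht
    have e := hub t ht
    rw [abs_of_nonpos ht.2] at e
    calc |u t| ≤ M * (-t) ^ m / m.factorial := e
      _ = (M / m.factorial * (-1)^m) * t ^ m := by rw [neg_pow]; ring
  have h3 : (∫ t in x..0, (M / m.factorial * (-1)^m) * t ^ m)
      = M * |x| ^ (m + 1) / ((m + 1).factorial : ℝ) := by
    rw [intervalIntegral.integral_const_mul, integral_pow, abs_of_nonpos hx2]
    have hfs : (((m+1).factorial : ℕ) : ℝ) = ((m:ℝ)+1) * (m.factorial : ℝ) := by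
      rw [Nat.factorial_succ]; push_cast; ring
    have hnegx : (-x)^(m+1) = (-1:ℝ)^m * x^(m+1) * (-1) := by
      rw [neg_pow, pow_succ]; ring
    rw [hfs, hnegx]
    have h1 : ((m:ℝ)+1) ≠ 0 := by positivity
    have hz : (0:ℝ)^(m+1) = 0 := zero_pow (by omega)
    rw [hz]
    field_simp
    ring
  linarith

lemma integral_bound_kernel (K : ℝ → ℝ) (hKc : Continuous K) (C : ℝ) (hC : 0 ≤ C)
    (hK : ∀ s ∈ Set.Icc (-1:ℝ) 0, |K s| ≤ C * |s|)
    (u : ℝ → ℝ) (hu : Continuous u) (M : ℝ) (hM : 0 ≤ M) (m : ℕ)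
    (x : ℝ) (hx : x ∈ Set.Icc (-1:ℝ) 0)
    (hub : ∀ t ∈ Set.Icc x 0, |u t| ≤ M * |t| ^ m / (m.factorial : ℝ)) :
    |∫ t in (0:ℝ)..x, K (x - t) * u t| ≤ C * M * |x| ^ (m + 2) / ((m + 2).factorial : ℝ) := by
  obtain ⟨hx1, hx2⟩ := hx
  have hfact : (0:ℝ) < (m.factorial : ℝ) := by exact_mod_cast m.factorial_pos
  rw [intervalIntegral.integral_symm, abs_neg]
  have hcont1 : Continuous fun t => K (x - t) * u t :=
    (hKc.comp (continuous_const.sub continuous_id)).mul hu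
  have h1 := intervalIntegral.abs_integral_le_integral_abs
    (f := fun t => K (x - t) * u t) (a := x) (b := 0) (μ := MeasureTheory.volume) hx2
  have h2 : (∫ t in x..0, |K (x - t) * u t|)
      ≤ ∫ t in x..0, (C * M / m.factorial) * ((t - x) * (-t)^m) := by
    apply intervalIntegral.integral_mono_on hx2 (hcont1.abs.intervalIntegrable _ _)
      (Continuous.intervalIntegrable (by fun_prop) _ _)
    intro t ht
    obtain ⟨ht1, ht2⟩ := ht
    have e1 : |K (x - t)| ≤ C * (t - x) := by
      have h := hK (x - t) ⟨by linarith, by linarith⟩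
      rwa [abs_of_nonpos (by linarith : x - t ≤ 0), neg_sub] at h
    have e2 : |u t| ≤ M * (-t)^m / m.factorial := by
      have h := hub t ⟨ht1, ht2⟩
      rwa [abs_of_nonpos ht2] at h
    rw [abs_mul]
    calc |K (x - t)| * |u t| ≤ (C * (t - x)) * (M * (-t)^m / m.factorial) :=
          mul_le_mul e1 e2 (abs_nonneg _) (mul_nonneg hC (by linarith))
      _ = (C * M / m.factorial) * ((t - x) * (-t)^m) := by ring
  have h3 : (∫ t in x..0, (C * M / m.factorial) * ((t - x) * (-t)^m))
      = C * M * |x| ^ (m + 2) / ((m + 2).factorial : ℝ) := by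
    have expand : Set.EqOn (fun t : ℝ => (C * M / m.factorial) * ((t - x) * (-t)^m))
        (fun t : ℝ => (C * M / m.factorial * (-1)^m) * t^(m+1)
          - (C * M / m.factorial * (-1)^m * x) * t^m) (Set.uIcc x 0) := by
      intro t _
      simp only
      rw [neg_pow]; ring
    rw [intervalIntegral.integral_congr expand]
    rw [intervalIntegral.integral_sub ((Continuous.intervalIntegrable (by fun_prop) _ _))
      ((Continuous.intervalIntegrable (by fun_prop) _ _)),
      intervalIntegral.integral_const_mul, intervalIntegral.integral_const_mul,
      integral_pow, integral_pow, abs_of_nonpos hx2]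
    have hfs : (((m+2).factorial : ℕ) : ℝ) = ((m:ℝ)+2) * (((m:ℝ)+1) * (m.factorial : ℝ)) := by
      rw [show m + 2 = (m+1)+1 from rfl, Nat.factorial_succ, Nat.factorial_succ]
      push_cast; ring
    have hnegx : (-x)^(m+2) = (-1:ℝ)^m * x^(m+2) := by
      rw [neg_pow, pow_add]; ring_nf
    rw [hfs, hnegx]
    have hm1 : ((m:ℝ)+1) ≠ 0 := by positivity
    have hm2 : ((m:ℝ)+2) ≠ 0 := by positivity
    have hz1 : (0:ℝ)^(m+1+1) = 0 := zero_pow (by omega)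
    have hz2 : (0:ℝ)^(m+1) = 0 := zero_pow (by omega)
    rw [hz1, hz2]
    push_cast
    field_simp
    ring
  linarith

lemma rep_lemma (c : ℝ) (K K₁ : ℝ → ℝ)
    (hK : ∀ s, HasDerivAt K (K₁ s) s) (hK₁ : ∀ s, HasDerivAt K₁ (c * K s) s)
    (hK0 : K 0 = 0) (hK₁0 : K₁ 0 = 1)
    (h h₁ h₂ q : ℝ → ℝ)
    (hh : ∀ s, HasDerivAt h (h₁ s) s) (hh₁ : ∀ s, HasDerivAt h₁ (h₂ s) s)
    (hq : ∀ t, q t = h₂ t - c * h t) (hqc : Continuous q)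
    (h0 : h 0 = 0) (h10 : h₁ 0 = 0) (x : ℝ) :
    ∫ t in (0:ℝ)..x, K (x - t) * q t = h x := by
  have hKcont : Continuous K := (Differentiable.continuous fun s => (hK s).differentiableAt)
  have key : ∀ t ∈ Set.uIcc (0:ℝ) x,
      HasDerivAt (fun t => K (x - t) * h₁ t + K₁ (x - t) * h t) (K (x - t) * q t) t := by
    intro t _
    have e1 : HasDerivAt (fun t : ℝ => K (x - t)) (-K₁ (x - t)) t := by
      have := (hK (x - t)).comp_const_sub x t
      simpa using this
    have e2 : HasDerivAt (fun t : ℝ => K₁ (x - t)) (-(c * K (x - t))) t := by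
      have := (hK₁ (x - t)).comp_const_sub x t
      simpa using this
    have := (e1.mul (hh₁ t)).add (e2.mul (hh t))
    refine this.congr_deriv ?_
    rw [hq t]; ring
  have hint : IntervalIntegrable (fun t => K (x - t) * q t) MeasureTheory.volume 0 x :=
    ((hKcont.comp (continuous_const.sub continuous_id)).mul hqc).intervalIntegrable _ _
  rw [intervalIntegral.integral_eq_sub_of_hasDerivAt key hint]
  simp [hK0, hK₁0, h0, h10]

lemma contDiff_iter {f : ℝ → ℝ} (hf : ContDiff ℝ (⊤ : ℕ∞) f) (n : ℕ) :
    ContDiff ℝ (⊤ : ℕ∞) (iteratedDeriv n f) := by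
  rw [iteratedDeriv_eq_iterate]
  exact ContDiff.iterate_deriv n (hf.of_le (mod_cast le_top))

lemma hasDerivAt_iter {f : ℝ → ℝ} (hf : ContDiff ℝ (⊤ : ℕ∞) f) (n : ℕ) (t : ℝ) :
    HasDerivAt (iteratedDeriv n f) (iteratedDeriv (n + 1) f t) t := by
  have h2 : DifferentiableAt ℝ (iteratedDeriv n f) t :=
    ((contDiff_iter hf n).differentiable (by simp)).differentiableAt
  rw [iteratedDeriv_succ]
  exact h2.hasDerivAt

lemma Ka_bound : ∀ s ∈ Set.Icc (-1:ℝ) 0,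
    |Real.sinh (Real.sqrt aK * s) / Real.sqrt aK| ≤ 2 * |s| := by
  intro s hs
  obtain ⟨hs1, hs2⟩ := hs
  have hs3 : |s| ≤ 1 := abs_le.2 ⟨hs1, by linarith⟩
  have hA := sqa_pos
  have hAl := sqa_lb
  rw [abs_div, abs_of_nonneg hA.le, Real.abs_sinh, abs_mul, abs_of_nonneg hA.le]
  have h1 : Real.sinh (Real.sqrt aK * |s|) ≤ |s| * Real.sinh (Real.sqrt aK) :=
    sinh_mul_le hA.le (abs_nonneg s) hs3
  have h2 := sinh_sqa_le
  have h3 : Real.sinh (Real.sqrt aK * |s|) ≤ |s| * (19/10) := by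
    nlinarith [abs_nonneg s]
  rw [div_le_iff₀ hA]
  nlinarith [abs_nonneg s]

lemma Kb_bound : ∀ s ∈ Set.Icc (-1:ℝ) 0,
    |Real.sin (Real.sqrt bK * s) / Real.sqrt bK| ≤ 1 * |s| := by
  intro s _
  have hB := sqb_pos
  rw [abs_div, abs_of_nonneg hB.le, div_le_iff₀ hB, one_mul]
  calc |Real.sin (Real.sqrt bK * s)| ≤ |Real.sqrt bK * s| := Real.abs_sin_le_abs
    _ = |s| * Real.sqrt bK := by rw [abs_mul, abs_of_nonneg hB.le]; ring

lemma g0_bound : ∀ x ∈ Set.Icc (-1:ℝ) 0, |g₀ x| ≤ |x| := by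
  intro x hx
  obtain ⟨hx1, hx2⟩ := hx
  have hxa : |x| ≤ 1 := abs_le.2 ⟨hx1, by linarith⟩
  have hx0 : 0 ≤ |x| := abs_nonneg x
  have hA := sqa_pos
  have hAl := sqa_lb
  have hA2 := sqa_sq
  have hB2 := sqb_sq
  have hB := sqb_pos
  have hs5 : (11/5:ℝ) ≤ aK + bK := by rw [aK_add_bK]; exact sqrt5_lb
  have hsum_pos : (0:ℝ) < aK + bK := by linarith
  have hg : g₀ x = (Real.cosh (Real.sqrt aK * x) - 1) / (aK * (aK + bK))
      - (1 - Real.cos (Real.sqrt bK * x)) / (bK * (aK + bK)) := by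
    unfold g₀; ring
  have hcosh : Real.cosh (Real.sqrt aK * x) - 1 ≤ (19/10) * Real.sqrt aK * (|x| * |x|) := by
    have h1 : Real.cosh (Real.sqrt aK * x) = Real.cosh (Real.sqrt aK * |x|) := by
      rw [← Real.cosh_abs, abs_mul, abs_of_nonneg hA.le]
    have h2 : Real.cosh (Real.sqrt aK * |x|) - 1
        ≤ (Real.sqrt aK * |x|) * Real.sinh (Real.sqrt aK * |x|) :=
      cosh_sub_one_le (by positivity)
    have h3 : Real.sinh (Real.sqrt aK * |x|) ≤ |x| * Real.sinh (Real.sqrt aK) :=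
      sinh_mul_le hA.le hx0 hxa
    have h4 := sinh_sqa_le
    have h5 : 0 ≤ Real.sinh (Real.sqrt aK) := by
      rw [Real.sinh_nonneg_iff]; exact hA.le
    rw [h1]
    nlinarith [h2, mul_le_mul_of_nonneg_left h3 (mul_nonneg hA.le hx0),
      mul_le_mul_of_nonneg_left h4 (mul_nonneg (mul_nonneg hA.le hx0) hx0)]
  have hcos : 1 - Real.cos (Real.sqrt bK * x) ≤ bK * (|x| * |x|) / 2 := by
    have h1 := Real.one_sub_sq_div_two_le_cos (x := Real.sqrt bK * x)
    have h2 : (Real.sqrt bK * x)^2 = bK * (|x| * |x|) := by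
      rw [mul_pow, hB2, sq, ← abs_mul_abs_self x]
    linarith [h2 ▸ h1]
  have hXnn : 0 ≤ (Real.cosh (Real.sqrt aK * x) - 1) / (aK * (aK + bK)) := by
    apply div_nonneg _ (mul_pos aK_pos hsum_pos).le
    linarith [Real.one_le_cosh (Real.sqrt aK * x)]
  have hYnn : 0 ≤ (1 - Real.cos (Real.sqrt bK * x)) / (bK * (aK + bK)) := by
    apply div_nonneg _ (mul_pos bK_pos hsum_pos).le
    linarith [Real.cos_le_one (Real.sqrt bK * x)]
  have e1 : (Real.cosh (Real.sqrt aK * x) - 1) / (aK * (aK + bK)) ≤ (95/132) * |x| := by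
    rw [div_le_iff₀ (mul_pos aK_pos hsum_pos)]
    have k0 : aK = Real.sqrt aK ^ 2 := hA2.symm
    have k1 : (66/25) * Real.sqrt aK ≤ Real.sqrt aK ^ 2 * (aK + bK) := by
      nlinarith [mul_nonneg (sub_nonneg.2 hAl) (sub_nonneg.2 hs5), hA.le, hs5, hAl]
    calc Real.cosh (Real.sqrt aK * x) - 1 ≤ (19/10) * Real.sqrt aK * (|x| * |x|) := hcosh
      _ ≤ (19/10) * Real.sqrt aK * |x| := by
          nlinarith [mul_nonneg (mul_nonneg hA.le hx0) (sub_nonneg.2 hxa)]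
      _ = (95/132) * |x| * ((66/25) * Real.sqrt aK) := by ring
      _ ≤ (95/132) * |x| * (Real.sqrt aK ^ 2 * (aK + bK)) := by
          nlinarith [mul_le_mul_of_nonneg_left k1 (by positivity : (0:ℝ) ≤ 95/132 * |x|)]
      _ = 95/132 * |x| * (aK * (aK + bK)) := by rw [hA2]
  have e2 : (1 - Real.cos (Real.sqrt bK * x)) / (bK * (aK + bK)) ≤ (1/4) * |x| := by
    rw [div_le_iff₀ (mul_pos bK_pos hsum_pos)]
    calc 1 - Real.cos (Real.sqrt bK * x) ≤ bK * (|x| * |x|) / 2 := hcos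
      _ ≤ (1/4) * |x| * (bK * (aK + bK)) := by
          nlinarith [mul_nonneg (mul_nonneg bK_pos.le hx0) (sub_nonneg.2 hs5),
            mul_nonneg (mul_nonneg bK_pos.le hx0) (sub_nonneg.2 hxa)]
  rw [hg]
  rw [abs_le]
  constructor
  · linarith
  · linarith

theorem gj_pointwise_bound (g : ℕ → ℝ → ℝ)
    (hsm : ∀ j, ContDiff ℝ (⊤ : ℕ∞) (g j))
    (hg0 : g 0 = g₀)
    (hode : ∀ j, 1 ≤ j → ∀ x ∈ Set.Icc (-1 : ℝ) 0,
      deriv (g j) x + iteratedDeriv 3 (g j) x - iteratedDeriv 5 (g j) x = -(g (j - 1) x))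
    (hbc : ∀ j, 1 ≤ j → g j 0 = 0 ∧ deriv (g j) 0 = 0 ∧ iteratedDeriv 2 (g j) 0 = 0 ∧
      iteratedDeriv 3 (g j) 0 = 0 ∧ iteratedDeriv 4 (g j) 0 = 0) :
    ∀ j : ℕ, ∀ x ∈ Set.Icc (-1 : ℝ) 0,
      |g j x| ≤ 2 ^ j * |x| ^ (5 * j + 1) / (Nat.factorial (5 * j + 1)) := by
  intro j
  induction j with
  | zero =>
    intro x hx
    rw [hg0]
    have := g0_bound x hx
    norm_num [Nat.factorial]
    linarith
  | succ n ih =>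
    have hsmG := hsm (n + 1)
    obtain ⟨hb0, hb1, hb2, hb3, hb4⟩ := hbc (n + 1) (by omega)
    have hodeG := hode (n + 1) (by omega)
    rw [Nat.add_sub_cancel] at hodeG
    have hcont : ∀ m : ℕ, Continuous (iteratedDeriv m (g (n+1))) :=
      fun m => (contDiff_iter hsmG m).continuous
    have hcontH : Continuous (g n) := (hsm n).continuous
    have hDA : ∀ m t, HasDerivAt (iteratedDeriv m (g (n+1))) (iteratedDeriv (m+1) (g (n+1)) t) t :=
      fun m t => hasDerivAt_iter hsmG m t
    have d0 : ∀ t, HasDerivAt (g (n+1)) (iteratedDeriv 1 (g (n+1)) t) t := by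
      intro t
      have := hDA 0 t
      rwa [iteratedDeriv_zero] at this
    set P : ℝ → ℝ := fun t =>
      iteratedDeriv 4 (g (n+1)) t - iteratedDeriv 2 (g (n+1)) t - g (n+1) t with hPdef
    set W : ℝ → ℝ := fun t => iteratedDeriv 2 (g (n+1)) t + bK * g (n+1) t with hWdef
    have hPcont : Continuous P := ((hcont 4).sub (hcont 2)).sub hsmG.continuous
    have hWcont : Continuous W := (hcont 2).add (continuous_const.mul hsmG.continuous)
    -- Stage 1 : P x = ∫₀ˣ g n
    have hP : ∀ x ∈ Set.Icc (-1:ℝ) 0, P x = ∫ t in (0:ℝ)..x, g n t := by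
      intro x hx
      have hDP : ∀ t ∈ Set.uIcc (0:ℝ) x, HasDerivAt P (g n t) t := by
        intro t ht
        rw [Set.uIcc_of_ge hx.2] at ht
        have htx : t ∈ Set.Icc (-1:ℝ) 0 := ⟨le_trans hx.1 ht.1, ht.2⟩
        have h5 := hodeG t htx
        have hd1 : deriv (g (n+1)) t = iteratedDeriv 1 (g (n+1)) t := (congrFun iteratedDeriv_one t).symm
        rw [hd1] at h5
        have hcomb := ((hDA 4 t).sub (hDA 2 t)).sub (d0 t)
        refine hcomb.congr_deriv ?_
        linarith
      have := intervalIntegral.integral_eq_sub_of_hasDerivAt hDP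
        (hcontH.intervalIntegrable _ _)
      rw [this]
      have hP0 : P 0 = 0 := by simp only [hPdef, hb4, hb2, hb0]; ring
      rw [hP0, sub_zero]
    have hPb : ∀ x ∈ Set.Icc (-1:ℝ) 0,
        |P x| ≤ 2^n * |x|^(5*n+2) / ((5*n+2).factorial : ℝ) := by
      intro x hx
      rw [hP x hx]
      have h := integral_bound_simple (g n) hcontH (2^n) (by positivity) (5*n+1) x hx.2
        (fun t ht => ih t ⟨le_trans hx.1 ht.1, ht.2⟩)
      simpa [show 5*n+1+1 = 5*n+2 by omega] using h
    -- kernels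
    have hA := sqa_pos
    set Ka : ℝ → ℝ := fun s => Real.sinh (Real.sqrt aK * s) / Real.sqrt aK with hKadef
    set Ka₁ : ℝ → ℝ := fun s => Real.cosh (Real.sqrt aK * s) with hKa1def
    have hKad : ∀ s, HasDerivAt Ka (Ka₁ s) s := by
      intro s
      have h1 : HasDerivAt (fun s : ℝ => Real.sinh (Real.sqrt aK * s))
          (Real.cosh (Real.sqrt aK * s) * Real.sqrt aK) s := by
        have := (Real.hasDerivAt_sinh (Real.sqrt aK * s)).comp s
          ((hasDerivAt_id s).const_mul (Real.sqrt aK))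
        simpa [Function.comp_def, mul_comm] using this
      have h2 := h1.div_const (Real.sqrt aK)
      rwa [mul_div_assoc, div_self (ne_of_gt hA), mul_one] at h2
    have hKa1d : ∀ s, HasDerivAt Ka₁ (aK * Ka s) s := by
      intro s
      have h1 : HasDerivAt (fun s : ℝ => Real.cosh (Real.sqrt aK * s))
          (Real.sinh (Real.sqrt aK * s) * Real.sqrt aK) s := by
        have := (Real.hasDerivAt_cosh (Real.sqrt aK * s)).comp s
          ((hasDerivAt_id s).const_mul (Real.sqrt aK))
        simpa [Function.comp_def, mul_comm] using this
      refine h1.congr_deriv ?_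
      simp only [hKadef]
      rw [mul_div_assoc', eq_div_iff (ne_of_gt hA)]
      linear_combination (Real.sinh (Real.sqrt aK * s)) * sqa_sq
    have hKa0 : Ka 0 = 0 := by simp [hKadef]
    have hKa10 : Ka₁ 0 = 1 := by simp [hKa1def]
    have hKacont : Continuous Ka :=
      (Real.continuous_sinh.comp (continuous_const.mul continuous_id)).div_const _
    -- Stage 2 : W x = ∫₀ˣ Ka (x - t) * P t
    have hab := aK_mul_bK
    have hamb := aK_sub_bK
    have hWrep : ∀ x : ℝ, W x = ∫ t in (0:ℝ)..x, Ka (x - t) * P t := by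
      intro x
      have hWd : ∀ t, HasDerivAt W
          (iteratedDeriv 3 (g (n+1)) t + bK * iteratedDeriv 1 (g (n+1)) t) t :=
        fun t => (hDA 2 t).add ((d0 t).const_mul bK)
      have hW1d : ∀ t, HasDerivAt
          (fun t => iteratedDeriv 3 (g (n+1)) t + bK * iteratedDeriv 1 (g (n+1)) t)
          (iteratedDeriv 4 (g (n+1)) t + bK * iteratedDeriv 2 (g (n+1)) t) t :=
        fun t => (hDA 3 t).add ((hDA 1 t).const_mul bK)
      have hq : ∀ t, P t = (iteratedDeriv 4 (g (n+1)) t + bK * iteratedDeriv 2 (g (n+1)) t)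
          - aK * W t := by
        intro t
        simp only [hPdef, hWdef]
        linear_combination (iteratedDeriv 2 (g (n+1)) t) * hamb + (g (n+1) t) * hab
      have hW0 : W 0 = 0 := by simp only [hWdef, hb2, hb0]; ring
      have hW10 : iteratedDeriv 3 (g (n+1)) 0 + bK * iteratedDeriv 1 (g (n+1)) 0 = 0 := by
        rw [iteratedDeriv_one, hb3, hb1]; ring
      exact (rep_lemma aK Ka Ka₁ hKad hKa1d hKa0 hKa10 W _ _ P hWd hW1d hq hPcont hW0 hW10 x).symm
    have hWb : ∀ x ∈ Set.Icc (-1:ℝ) 0,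
        |W x| ≤ 2^(n+1) * |x|^(5*n+4) / ((5*n+4).factorial : ℝ) := by
      intro x hx
      rw [hWrep x]
      have h := integral_bound_kernel Ka hKacont 2 (by norm_num) Ka_bound P hPcont (2^n)
        (by positivity) (5*n+2) x hx (fun t ht => hPb t ⟨le_trans hx.1 ht.1, ht.2⟩)
      have e : (2:ℝ) * 2^n = 2^(n+1) := by rw [pow_succ]; ring
      calc |∫ t in (0:ℝ)..x, Ka (x - t) * P t|
          ≤ 2 * 2^n * |x|^(5*n+2+2) / ((5*n+2+2).factorial : ℝ) := h
        _ = 2^(n+1) * |x|^(5*n+4) / ((5*n+4).factorial : ℝ) := by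
            rw [show 5*n+2+2 = 5*n+4 by omega, e]
    -- Stage 3 : g (n+1) x = ∫₀ˣ Kb (x - t) * W t
    have hB := sqb_pos
    set Kb : ℝ → ℝ := fun s => Real.sin (Real.sqrt bK * s) / Real.sqrt bK with hKbdef
    set Kb₁ : ℝ → ℝ := fun s => Real.cos (Real.sqrt bK * s) with hKb1def
    have hKbd : ∀ s, HasDerivAt Kb (Kb₁ s) s := by
      intro s
      have h1 : HasDerivAt (fun s : ℝ => Real.sin (Real.sqrt bK * s))
          (Real.cos (Real.sqrt bK * s) * Real.sqrt bK) s := by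
        have := (Real.hasDerivAt_sin (Real.sqrt bK * s)).comp s
          ((hasDerivAt_id s).const_mul (Real.sqrt bK))
        simpa [Function.comp_def, mul_comm] using this
      have h2 := h1.div_const (Real.sqrt bK)
      rwa [mul_div_assoc, div_self (ne_of_gt hB), mul_one] at h2
    have hKb1d : ∀ s, HasDerivAt Kb₁ ((-bK) * Kb s) s := by
      intro s
      have h1 : HasDerivAt (fun s : ℝ => Real.cos (Real.sqrt bK * s))
          (-Real.sin (Real.sqrt bK * s) * Real.sqrt bK) s := by
        have := (Real.hasDerivAt_cos (Real.sqrt bK * s)).comp s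
          ((hasDerivAt_id s).const_mul (Real.sqrt bK))
        simpa [Function.comp_def, mul_comm] using this
      refine h1.congr_deriv ?_
      simp only [hKbdef]
      rw [mul_div_assoc', eq_div_iff (ne_of_gt hB)]
      linear_combination (-Real.sin (Real.sqrt bK * s)) * sqb_sq
    have hKb0 : Kb 0 = 0 := by simp [hKbdef]
    have hKb10 : Kb₁ 0 = 1 := by simp [hKb1def]
    have hKbcont : Continuous Kb :=
      (Real.continuous_sin.comp (continuous_const.mul continuous_id)).div_const _
    have hGrep : ∀ x : ℝ, g (n+1) x = ∫ t in (0:ℝ)..x, Kb (x - t) * W t := by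
      intro x
      have hq : ∀ t, W t = iteratedDeriv 2 (g (n+1)) t - (-bK) * g (n+1) t := by
        intro t; simp only [hWdef]; ring
      have h10 : iteratedDeriv 1 (g (n+1)) 0 = 0 := by rw [iteratedDeriv_one]; exact hb1
      exact (rep_lemma (-bK) Kb Kb₁ hKbd hKb1d hKb0 hKb10 (g (n+1)) _ _ W d0
        (fun t => hDA 1 t) hq hWcont hb0 h10 x).symm
    intro x hx
    rw [hGrep x]
    have h := integral_bound_kernel Kb hKbcont 1 (by norm_num) Kb_bound W hWcont (2^(n+1))
      (by positivity) (5*n+4) x hx (fun t ht => hWb t ⟨le_trans hx.1 ht.1, ht.2⟩)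
    calc |∫ t in (0:ℝ)..x, Kb (x - t) * W t|
        ≤ 1 * 2^(n+1) * |x|^(5*n+4+2) / ((5*n+4+2).factorial : ℝ) := h
      _ = 2^(n+1) * |x|^(5*(n+1)+1) / ((5*(n+1)+1).factorial : ℝ) := by
          rw [show 5*n+4+2 = 5*(n+1)+1 by omega]; ring
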